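/- Let d ≥ 1 be an integer and let c : (0,∞) → ℝ be a smooth function satisfying −t c''(t) − d c'(t) + t c(t) = 1 for all t > 0, and such that for every n ∈ ℕ there is a constant C_n with |c^{(n)}(t)| ≤ C_n t^{−1−n} for all t > 0. Then for every integer N ≥ 1 and every n ∈ ℕ there exists a constant C_{n,N} such that |(d/dt)^n ( c(t) − Σ_{j=0}^{N−1} h_{d,j}(t) )| ≤ C_{n,N} t^{−1−2N−n} for all t > 0. -/

import Mathlib

open scoped Nat

/-- The homogeneous functions `h_{d,j}` of the asymptotic expansion of `c_d`. -/
noncomputable def hfun (d j : ℕ) : ℝ → ℝ :=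
  if j = 0 then fun t => t⁻¹
  else fun t =>
    ((-1 : ℝ) ^ j * ((2*j - 1)‼ : ℝ) * ∏ l ∈ Finset.Icc 1 j, ((d : ℝ) - 2 * l)) *
      t ^ (-1 - 2 * (j : ℤ))

namespace Stmt14Aux

noncomputable def Acoef (d j : ℕ) : ℝ :=
  (-1 : ℝ) ^ j * ((2*j - 1)‼ : ℝ) * ∏ l ∈ Finset.Icc 1 j, ((d : ℝ) - 2 * l)

lemma hfun_eq (d j : ℕ) : hfun d j = fun t => Acoef d j * t ^ (-1 - 2 * (j : ℤ)) := by
  unfold hfun Acoef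
  rcases eq_or_ne j 0 with rfl | hj
  · funext t; norm_num
  · simp [hj]

lemma Acoef_succ (d j : ℕ) :
    Acoef d (j+1) = (2*(j:ℝ)+1) * ((2*(j:ℝ)+2) - d) * Acoef d j := by
  unfold Acoef
  rw [Finset.prod_Icc_succ_top (Nat.le_add_left 1 j)]
  have hdf : ((2*(j+1) - 1)‼ : ℕ) = (2*j+1) * (2*j-1)‼ := by
    cases j with
    | zero => rfl
    | succ k =>
      have h : 2*(k+1+1) - 1 = (2*(k+1) - 1) + 2 := by omega
      rw [h, Nat.doubleFactorial_add_two]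
      congr 1
  rw [hdf]
  push_cast
  ring

lemma contDiffAt_zpow' (m : ℤ) {x : ℝ} (hx : x ≠ 0) :
    ContDiffAt ℝ (⊤ : ℕ∞) (fun x : ℝ => x ^ m) x := by
  cases m with
  | ofNat k =>
      simp only [Int.ofNat_eq_coe, zpow_natCast]
      exact (contDiff_id.pow k).contDiffAt
  | negSucc k =>
      simp only [zpow_negSucc]
      exact ((contDiff_id.pow (k+1)).contDiffAt).inv (pow_ne_zero _ hx)

lemma hfun_contDiffOn (d j : ℕ) : ContDiffOn ℝ (⊤ : ℕ∞) (hfun d j) (Set.Ioi 0) := by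
  rw [hfun_eq]
  exact fun x hx =>
    (((contDiffAt_zpow' (-1 - 2*(j:ℤ)) (ne_of_gt hx)).const_smul (Acoef d j)).congr_of_eventuallyEq (by filter_upwards with y; simp [smul_eq_mul])).contDiffWithinAt


lemma itd_iterate_add (f : ℝ → ℝ) (n m : ℕ) :
    iteratedDeriv n (iteratedDeriv m f) = iteratedDeriv (n + m) f := by
  simp only [iteratedDeriv_eq_iterate]
  rw [Function.iterate_add_apply]

lemma itd_deriv (f : ℝ → ℝ) (n : ℕ) :
    iteratedDeriv n (deriv f) = iteratedDeriv (n + 1) f := by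
  rw [show deriv f = iteratedDeriv 1 f from iteratedDeriv_one.symm, itd_iterate_add]

lemma itd_deriv2 (f : ℝ → ℝ) (n : ℕ) :
    iteratedDeriv n (deriv (deriv f)) = iteratedDeriv (n + 2) f := by
  rw [show deriv (deriv f) = iteratedDeriv 2 f by
        rw [iteratedDeriv_succ, iteratedDeriv_one], itd_iterate_add]

lemma itd_open {f : ℝ → ℝ} {s : Set ℝ} (hs : IsOpen s) {x : ℝ} (hx : x ∈ s) (n : ℕ) :
    iteratedDerivWithin n f s x = iteratedDeriv n f x := by
  rw [iteratedDerivWithin_eq_iteratedFDerivWithin, iteratedDeriv_eq_iteratedFDeriv,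
    iteratedFDerivWithin_of_isOpen n hs hx]

lemma itd_inv (k : ℕ) (x : ℝ) :
    iteratedDeriv k (fun y : ℝ => y⁻¹) x
      = (∏ i ∈ Finset.range k, (-1 - (i:ℝ))) * x ^ (-1 - (k:ℤ)) := by
  rw [iteratedDeriv_eq_iterate]
  rw [show (fun y : ℝ => y⁻¹) = Inv.inv from rfl, iter_deriv_inv]
  congr 1
  induction k with
  | zero => simp
  | succ k ih => rw [Finset.prod_range_succ, ← ih, pow_succ, Nat.factorial_succ]; push_cast; ring

lemma contDiffOn_inv_Ioi : ContDiffOn ℝ (⊤ : ℕ∞) (fun y : ℝ => y⁻¹) (Set.Ioi 0) := by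
  intro x hx
  exact (contDiffAt_inv ℝ (ne_of_gt hx)).contDiffWithinAt

lemma leibniz_bound {f : ℝ → ℝ} (hf : ContDiffOn ℝ (⊤ : ℕ∞) f (Set.Ioi 0)) (n : ℕ)
    {t : ℝ} (ht : 0 < t) :
    |iteratedDeriv n (fun y => f y * y⁻¹) t| ≤
      ∑ i ∈ Finset.range (n+1), (n.choose i : ℝ) * |iteratedDeriv i f t| *
        |iteratedDeriv (n-i) (fun y : ℝ => y⁻¹) t| := by
  have hmem : t ∈ Set.Ioi (0:ℝ) := ht
  have conv : ∀ (k : ℕ) (h : ℝ → ℝ),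
      ‖iteratedFDerivWithin ℝ k h (Set.Ioi 0) t‖ = |iteratedDeriv k h t| := by
    intro k h
    rw [iteratedFDerivWithin_of_isOpen k isOpen_Ioi hmem,
      norm_iteratedFDeriv_eq_norm_iteratedDeriv, Real.norm_eq_abs]
  have H := norm_iteratedFDerivWithin_mul_le (𝕜 := ℝ) hf contDiffOn_inv_Ioi
    isOpen_Ioi.uniqueDiffOn hmem (by exact_mod_cast (le_top : (n : ℕ∞) ≤ ⊤) : (n : WithTop ℕ∞) ≤ ((⊤ : ℕ∞) : WithTop ℕ∞))
  rw [conv] at H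
  refine H.trans (le_of_eq ?_)
  refine Finset.sum_congr rfl fun i _ => ?_
  rw [conv, conv]


lemma deriv_const_zpow (C : ℝ) (m : ℤ) {t : ℝ} (ht : t ≠ 0) :
    deriv (fun x : ℝ => C * x ^ m) t = (C * m) * t ^ (m - 1) := by
  rw [deriv_const_mul _ (differentiableAt_zpow.mpr (Or.inl ht)), deriv_zpow]
  ring

lemma hfun_rec (d j : ℕ) {t : ℝ} (ht : 0 < t) :
    (Acoef d j * (-1 - 2*(j:ℝ))) * (-2 - 2*(j:ℝ)) * t ^ (-3 - 2*(j:ℤ))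
      + (d:ℝ) * ((Acoef d j * (-1 - 2*(j:ℝ))) * (t ^ (-2 - 2*(j:ℤ)) * t⁻¹))
      = hfun d (j+1) t := by
  have h1 : t ^ (-2 - 2*(j:ℤ)) * t⁻¹ = t ^ (-3 - 2*(j:ℤ)) := by
    rw [← zpow_neg_one t, ← zpow_add₀ ht.ne']
    congr 1
    ring
  have h2 : (-1 - 2*(((j+1):ℕ):ℤ)) = -3 - 2*(j:ℤ) := by push_cast; ring
  rw [hfun_eq, h1, Acoef_succ, h2]
  push_cast
  ring

end Stmt14Aux

open Stmt14Aux

set_option linter.unusedVariables false in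
theorem stmt14 (d : ℕ) (hd : 1 ≤ d) (c : ℝ → ℝ)
    (hc : ContDiffOn ℝ (⊤ : ℕ∞) c (Set.Ioi 0))
    (hode : ∀ t : ℝ, 0 < t → -t * deriv (deriv c) t - d * deriv c t + t * c t = 1)
    (hbound : ∀ n : ℕ, ∃ C : ℝ, ∀ t : ℝ, 0 < t →
      |iteratedDeriv n c t| ≤ C * t ^ (-1 - (n : ℤ))) :
    ∀ (N : ℕ), 1 ≤ N → ∀ n : ℕ, ∃ C : ℝ, ∀ t : ℝ, 0 < t →
      |iteratedDeriv n (fun t => c t - ∑ j ∈ Finset.range N, hfun d j t) t|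
        ≤ C * t ^ (-1 - 2 * (N : ℤ) - (n : ℤ)) := by
  have hsO : IsOpen (Set.Ioi (0:ℝ)) := isOpen_Ioi
  have hR : ∀ N : ℕ, ContDiffOn ℝ (⊤ : ℕ∞) (fun t => c t - ∑ j ∈ Finset.range N, hfun d j t)
      (Set.Ioi 0) := fun N => hc.sub (ContDiffOn.sum fun j _ => hfun_contDiffOn d j)
  have hdc : ∀ {t : ℝ}, t ∈ Set.Ioi (0:ℝ) → DifferentiableAt ℝ c t := fun ht =>
    (hc.contDiffAt (hsO.mem_nhds ht)).differentiableAt (by simp)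
  have hdh : ∀ (j : ℕ) {t : ℝ}, t ≠ 0 → DifferentiableAt ℝ (hfun d j) t := by
    intro j t ht
    rw [hfun_eq]
    exact (differentiableAt_zpow.mpr (Or.inl ht)).const_mul _
  have D1 : ∀ (N : ℕ) {t : ℝ}, t ∈ Set.Ioi (0:ℝ) →
      deriv (fun y => c y - ∑ j ∈ Finset.range N, hfun d j y) t
      = deriv c t - ∑ j ∈ Finset.range N,
          (Acoef d j * (-1 - 2*(j:ℝ))) * t ^ (-2 - 2*(j:ℤ)) := by
    intro N t ht
    have ht0 : t ≠ 0 := ne_of_gt ht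
    rw [deriv_fun_sub (hdc ht) (DifferentiableAt.fun_sum fun j _ => hdh j ht0),
        deriv_fun_sum (fun j _ => hdh j ht0)]
    congr 1
    refine Finset.sum_congr rfl fun j _ => ?_
    rw [hfun_eq, deriv_const_zpow _ _ ht0,
        show (-1 - 2*(j:ℤ) - 1) = -2 - 2*(j:ℤ) from by ring]
    push_cast
    ring
  have D2 : ∀ (N : ℕ) {t : ℝ}, t ∈ Set.Ioi (0:ℝ) →
      deriv (deriv (fun y => c y - ∑ j ∈ Finset.range N, hfun d j y)) t
      = deriv (deriv c) t - ∑ j ∈ Finset.range N,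
          (Acoef d j * (-1 - 2*(j:ℝ))) * (-2 - 2*(j:ℝ)) * t ^ (-3 - 2*(j:ℤ)) := by
    intro N t ht
    have ht0 : t ≠ 0 := ne_of_gt ht
    have hev : deriv (fun y => c y - ∑ j ∈ Finset.range N, hfun d j y) =ᶠ[nhds t]
        (fun y => deriv c y - ∑ j ∈ Finset.range N,
          (Acoef d j * (-1 - 2*(j:ℝ))) * y ^ (-2 - 2*(j:ℤ))) := by
      filter_upwards [hsO.mem_nhds ht] with y hy using D1 N hy
    have hdc2 : DifferentiableAt ℝ (deriv c) t :=
      ((hc.deriv_of_isOpen hsO (m := (⊤ : ℕ∞)) (by simp)).contDiffAt (hsO.mem_nhds ht)).differentiableAt (by simp)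
    rw [hev.deriv_eq,
      deriv_fun_sub hdc2
        (DifferentiableAt.fun_sum fun j _ => (differentiableAt_zpow.mpr (Or.inl ht0)).const_mul _),
      deriv_fun_sum (fun j _ => (differentiableAt_zpow.mpr (Or.inl ht0)).const_mul _)]
    congr 1
    refine Finset.sum_congr rfl fun j _ => ?_
    rw [deriv_const_zpow _ _ ht0,
        show (-2 - 2*(j:ℤ) - 1) = -3 - 2*(j:ℤ) from by ring]
    push_cast
    ring
  have K : ∀ (N : ℕ), Set.EqOn (fun y => c y - ∑ j ∈ Finset.range (N+1), hfun d j y)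
      (fun y => deriv (deriv (fun z => c z - ∑ j ∈ Finset.range N, hfun d j z)) y
        + (d:ℝ) * (deriv (fun z => c z - ∑ j ∈ Finset.range N, hfun d j z) y * y⁻¹))
      (Set.Ioi 0) := by
    intro N t ht
    have htp : (0:ℝ) < t := ht
    have ht0 : t ≠ 0 := ne_of_gt htp
    simp only
    rw [D1 N ht, D2 N ht]
    have hodet : deriv (deriv c) t + (d:ℝ) * (deriv c t * t⁻¹) = c t - t⁻¹ := by
      have h := hode t htp
      field_simp
      linear_combination -h
    have hsum : (∑ j ∈ Finset.range N,
          (Acoef d j * (-1 - 2*(j:ℝ))) * (-2 - 2*(j:ℝ)) * t ^ (-3 - 2*(j:ℤ)))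
        + (d:ℝ) * ((∑ j ∈ Finset.range N,
          (Acoef d j * (-1 - 2*(j:ℝ))) * t ^ (-2 - 2*(j:ℤ))) * t⁻¹)
        = ∑ j ∈ Finset.range N, hfun d (j+1) t := by
      rw [Finset.sum_mul, Finset.mul_sum, ← Finset.sum_add_distrib]
      refine Finset.sum_congr rfl fun j _ => ?_
      linear_combination hfun_rec d j htp
    rw [Finset.sum_range_succ', show hfun d 0 t = t⁻¹ from by simp [hfun]]
    linear_combination hsum - hodet
  -- main claim
  have main : ∀ N : ℕ, ∀ n : ℕ, ∃ C : ℝ, ∀ t : ℝ, 0 < t →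
      |iteratedDeriv n (fun t => c t - ∑ j ∈ Finset.range N, hfun d j t) t|
        ≤ C * t ^ (-1 - 2 * (N : ℤ) - (n : ℤ)) := by
    intro N
    induction N with
    | zero =>
      intro n
      obtain ⟨C, hC⟩ := hbound n
      refine ⟨C, fun t ht => ?_⟩
      have h0 : (fun y => c y - ∑ j ∈ Finset.range 0, hfun d j y) = c := by
        funext y; simp
      have e : (-1 - 2 * ((0:ℕ):ℤ) - (n:ℤ)) = -1 - (n:ℤ) := by push_cast; ring
      rw [h0, e]
      exact hC t ht
    | succ N IH =>
      intro n
      choose C0 hC0 using IH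
      refine ⟨|C0 (n+2)| + d * ∑ i ∈ Finset.range (n+1), (n.choose i : ℝ) * |C0 (i+1)| *
        |∏ k ∈ Finset.range (n-i), (-1 - (k:ℝ))|, fun t ht => ?_⟩
      have hmem : t ∈ Set.Ioi (0:ℝ) := ht
      have ht0 : t ≠ 0 := ne_of_gt ht
      have hF1 : ContDiffOn ℝ (⊤ : ℕ∞) (deriv (fun z => c z - ∑ j ∈ Finset.range N, hfun d j z))
          (Set.Ioi 0) := (hR N).deriv_of_isOpen hsO (by simp)
      have hF2 : ContDiffOn ℝ (⊤ : ℕ∞)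
          (deriv (deriv (fun z => c z - ∑ j ∈ Finset.range N, hfun d j z)))
          (Set.Ioi 0) := hF1.deriv_of_isOpen hsO (by simp)
      have hG : ContDiffOn ℝ (⊤ : ℕ∞)
          (fun y => deriv (fun z => c z - ∑ j ∈ Finset.range N, hfun d j z) y * y⁻¹)
          (Set.Ioi 0) := hF1.mul contDiffOn_inv_Ioi
      -- step 1 : replace by Q
      have step1 := (K N).iteratedDeriv_of_isOpen hsO n hmem
      -- step 2 : split the iterated derivative
      have step2 : iteratedDeriv n
          (fun y => deriv (deriv (fun z => c z - ∑ j ∈ Finset.range N, hfun d j z)) y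
            + (d:ℝ) * (deriv (fun z => c z - ∑ j ∈ Finset.range N, hfun d j z) y * y⁻¹)) t
          = iteratedDeriv (n+2) (fun z => c z - ∑ j ∈ Finset.range N, hfun d j z) t
            + (d:ℝ) * iteratedDeriv n
              (fun y => deriv (fun z => c z - ∑ j ∈ Finset.range N, hfun d j z) y * y⁻¹) t := by
        have e1 : iteratedDeriv n
            (fun y => deriv (deriv (fun z => c z - ∑ j ∈ Finset.range N, hfun d j z)) y
              + (d:ℝ) * (deriv (fun z => c z - ∑ j ∈ Finset.range N, hfun d j z) y * y⁻¹)) t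
            = iteratedDerivWithin n
              ((deriv (deriv (fun z => c z - ∑ j ∈ Finset.range N, hfun d j z)))
                + fun y => (d:ℝ) * (deriv (fun z => c z - ∑ j ∈ Finset.range N, hfun d j z) y * y⁻¹))
              (Set.Ioi 0) t := (itd_open hsO hmem n).symm
        rw [e1, iteratedDerivWithin_add hmem hsO.uniqueDiffOn (hF2.of_le (by exact_mod_cast le_top) t hmem)
            ((contDiffOn_const.mul hG).of_le (by exact_mod_cast le_top) t hmem),
          iteratedDerivWithin_const_mul hmem hsO.uniqueDiffOn (d:ℝ) (hG.of_le (by exact_mod_cast le_top) t hmem),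
          itd_open hsO hmem n, itd_open hsO hmem n, itd_deriv2]
      -- bound for the first term
      have B1 : |iteratedDeriv (n+2) (fun z => c z - ∑ j ∈ Finset.range N, hfun d j z) t|
          ≤ |C0 (n+2)| * t ^ (-3 - 2*(N:ℤ) - (n:ℤ)) := by
        have h := hC0 (n+2) t ht
        rw [show (-1 - 2*(N:ℤ) - ((n+2:ℕ):ℤ)) = -3 - 2*(N:ℤ) - (n:ℤ) from by push_cast; ring]
          at h
        exact h.trans (mul_le_mul_of_nonneg_right (le_abs_self _) (zpow_pos ht _).le)
      -- bound for the product term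
      have B2 : |iteratedDeriv n
            (fun y => deriv (fun z => c z - ∑ j ∈ Finset.range N, hfun d j z) y * y⁻¹) t|
          ≤ (∑ i ∈ Finset.range (n+1), (n.choose i : ℝ) * |C0 (i+1)| *
              |∏ k ∈ Finset.range (n-i), (-1 - (k:ℝ))|) * t ^ (-3 - 2*(N:ℤ) - (n:ℤ)) := by
        refine (leibniz_bound hF1 n ht).trans ?_
        rw [Finset.sum_mul]
        refine Finset.sum_le_sum fun i hi => ?_
        have hi' : i ≤ n := Nat.lt_succ_iff.mp (Finset.mem_range.mp hi)
        have b1 : |iteratedDeriv i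
              (deriv (fun z => c z - ∑ j ∈ Finset.range N, hfun d j z)) t|
            ≤ |C0 (i+1)| * t ^ (-2 - 2*(N:ℤ) - (i:ℤ)) := by
          rw [itd_deriv]
          have h := hC0 (i+1) t ht
          rw [show (-1 - 2*(N:ℤ) - ((i+1:ℕ):ℤ)) = -2 - 2*(N:ℤ) - (i:ℤ) from by push_cast; ring]
            at h
          exact h.trans (mul_le_mul_of_nonneg_right (le_abs_self _) (zpow_pos ht _).le)
        have b2 : |iteratedDeriv (n-i) (fun y : ℝ => y⁻¹) t|
            = |∏ k ∈ Finset.range (n-i), (-1 - (k:ℝ))| * t ^ (-1 - ((n-i:ℕ):ℤ)) := by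
          rw [itd_inv, abs_mul, abs_of_pos (zpow_pos ht _)]
        calc (n.choose i : ℝ) * |iteratedDeriv i
              (deriv (fun z => c z - ∑ j ∈ Finset.range N, hfun d j z)) t|
            * |iteratedDeriv (n-i) (fun y : ℝ => y⁻¹) t|
            ≤ (n.choose i : ℝ) * (|C0 (i+1)| * t ^ (-2 - 2*(N:ℤ) - (i:ℤ)))
              * (|∏ k ∈ Finset.range (n-i), (-1 - (k:ℝ))| * t ^ (-1 - ((n-i:ℕ):ℤ))) := by
              rw [b2]
              gcongr
          _ = ((n.choose i : ℝ) * |C0 (i+1)| * |∏ k ∈ Finset.range (n-i), (-1 - (k:ℝ))|)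
              * (t ^ (-2 - 2*(N:ℤ) - (i:ℤ)) * t ^ (-1 - ((n-i:ℕ):ℤ))) := by ring
          _ = ((n.choose i : ℝ) * |C0 (i+1)| * |∏ k ∈ Finset.range (n-i), (-1 - (k:ℝ))|)
              * t ^ (-3 - 2*(N:ℤ) - (n:ℤ)) := by
              rw [← zpow_add₀ ht0]
              congr 1
              have hni : ((n-i:ℕ):ℤ) = (n:ℤ) - (i:ℤ) := by
                push_cast [hi']
                ring
              rw [hni]
              ring
      -- put everything together
      have e2 : (-1 - 2 * (((N+1):ℕ):ℤ) - (n:ℤ)) = -3 - 2*(N:ℤ) - (n:ℤ) := by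
        push_cast; ring
      rw [step1, step2, e2]
      calc |iteratedDeriv (n+2) (fun z => c z - ∑ j ∈ Finset.range N, hfun d j z) t
            + (d:ℝ) * iteratedDeriv n
              (fun y => deriv (fun z => c z - ∑ j ∈ Finset.range N, hfun d j z) y * y⁻¹) t|
          ≤ |iteratedDeriv (n+2) (fun z => c z - ∑ j ∈ Finset.range N, hfun d j z) t|
            + (d:ℝ) * |iteratedDeriv n
              (fun y => deriv (fun z => c z - ∑ j ∈ Finset.range N, hfun d j z) y * y⁻¹) t| := by
            refine (abs_add_le _ _).trans ?_
            rw [abs_mul, Nat.abs_cast]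
        _ ≤ |C0 (n+2)| * t ^ (-3 - 2*(N:ℤ) - (n:ℤ))
            + (d:ℝ) * ((∑ i ∈ Finset.range (n+1), (n.choose i : ℝ) * |C0 (i+1)| *
              |∏ k ∈ Finset.range (n-i), (-1 - (k:ℝ))|) * t ^ (-3 - 2*(N:ℤ) - (n:ℤ))) :=
            add_le_add B1 (mul_le_mul_of_nonneg_left B2 (Nat.cast_nonneg d))
        _ = (|C0 (n+2)| + d * ∑ i ∈ Finset.range (n+1), (n.choose i : ℝ) * |C0 (i+1)| *
              |∏ k ∈ Finset.range (n-i), (-1 - (k:ℝ))|) * t ^ (-3 - 2*(N:ℤ) - (n:ℤ)) := by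
            ring
  exact fun N _ n => main N n
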